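/- arXiv:1902.09429 — 4 statements merged into one kernel-verified Lean document; each statement's English description precedes it below -/
import Mathlib

section
/- Let P be an affine plane in ℝ³, let T ∈ ℝ³ with T ∉ P, and let u₁, u₂ ∈ P with u₁ ≠ u₂. For i = 1, 2 let gᵢ : ℝ → ℝ be strictly decreasing on [0, π], and for A ∈ P define the objective G(A) = g₁(∠(u₁ − T, A − T)) + g₂(∠(u₂ − T, A − T)). Then every point A* ∈ P that maximizes G over P lies on the closed segment joining u₁ and u₂ (Proposition 1: with two users, the optimal steering angle points to a location on the line segment between the two user locations). -/
/-!
Seen from `T`, the angle to a user is the spherical distance between directions, and the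
segment `[u₁, u₂]` is the minor great-circle arc between the two users' directions `v₁, v₂`;
a point of `P` off the segment has a direction `a` outside the cone over that arc. For such `a`
the triangle inequality for angles is strict, `∠(v₁, v₂) < ∠(v₁, a) + ∠(a, v₂)`, so the point
of the arc at angle `min (∠(v₁, a)) (∠(v₁, v₂))` from `v₁` (intermediate value theorem) is no
farther from `v₁` and strictly closer to `v₂`, and it beats `A`.
-/

open InnerProductGeometry
open scoped NNReal

section Angles

variable {V : Type*} [NormedAddCommGroup V] [InnerProductSpace ℝ V]

theorem zero_mem_segment_of_angle_eq_pi {x z : V} (h : angle x z = Real.pi) :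
    (0 : V) ∈ segment ℝ x z := by
  have hsbtw : Sbtw ℝ x 0 z :=
    EuclideanGeometry.angle_eq_pi_iff_sbtw.1 (by simpa [EuclideanGeometry.angle] using h)
  exact hsbtw.wbtw.mem_segment

theorem exists_mem_segment_angle_eq {x z : V} (h0 : (0 : V) ∉ segment ℝ x z) {t : ℝ}
    (ht : t ∈ Set.Icc 0 (angle x z)) : ∃ b ∈ segment ℝ x z, angle x b = t := by
  have hx : x ≠ 0 := fun hx => h0 (hx ▸ left_mem_segment ℝ x z)
  have hcont : ContinuousOn (angle x) (segment ℝ x z) := fun b hb =>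
    ((continuousAt_angle (x := (x, b)) hx (ne_of_mem_of_not_mem hb h0)).comp
      (continuousAt_const.prodMk continuousAt_id)).continuousWithinAt
  have hivt := (convex_segment x z).isPreconnected.intermediate_value
    (left_mem_segment ℝ x z) (right_mem_segment ℝ x z) hcont
  rw [angle_self hx] at hivt
  exact hivt ht

theorem angle_add_angle_eq_of_mem_segment {x z b : V} (hb : b ∈ segment ℝ x z) (hb0 : b ≠ 0) :
    angle x b + angle b z = angle x z := by
  obtain ⟨s, t, hs, ht, -, rfl⟩ := hb
  exact (angle_eq_angle_add_add_angle_add_of_mem_span hb0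
    (Submodule.mem_span_pair.2 ⟨⟨s, hs⟩, ⟨t, ht⟩, rfl⟩)).symm

theorem exists_mem_segment_angle_le_and_angle_lt {x z a : V} (h0 : (0 : V) ∉ segment ℝ x z)
    (ha : a ∉ Submodule.span ℝ≥0 {x, z}) :
    ∃ b ∈ segment ℝ x z, angle x b ≤ angle x a ∧ angle z b < angle z a := by
  have ha0 : a ≠ 0 := by
    rintro rfl
    exact ha (Submodule.zero_mem _)
  have hxz : angle x z ≠ Real.pi := fun h => h0 (zero_mem_segment_of_angle_eq_pi h)
  have htri : angle x z < angle x a + angle a z :=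
    (angle_le_angle_add_angle x a z).lt_of_ne fun h =>
      ((angle_eq_angle_add_angle_iff ha0).1 h).elim hxz ha
  rcases le_total (angle x z) (angle x a) with hfar | hnear
  · have hz : z ≠ 0 := fun hz => h0 (hz ▸ right_mem_segment ℝ x z)
    refine ⟨z, right_mem_segment ℝ x z, hfar, ?_⟩
    rw [angle_self hz]
    refine (angle_nonneg z a).lt_of_ne fun h => ha ?_
    obtain ⟨-, r, hr, rfl⟩ := angle_eq_zero_iff.1 h.symm
    exact Submodule.smul_mem _ (⟨r, hr.le⟩ : ℝ≥0) (Submodule.subset_span (by simp))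
  · obtain ⟨b, hb, hxb⟩ := exists_mem_segment_angle_eq h0 ⟨angle_nonneg x a, hnear⟩
    refine ⟨b, hb, hxb.le, ?_⟩
    have hsplit := angle_add_angle_eq_of_mem_segment hb (ne_of_mem_of_not_mem hb h0)
    rw [angle_comm z b, angle_comm z a]
    linarith

end Angles

section Affine

variable {E : Type*} [AddCommGroup E] [Module ℝ E]

theorem sub_mem_segment_sub_iff {x u₁ u₂ T : E} :
    x - T ∈ segment ℝ (u₁ - T) (u₂ - T) ↔ x ∈ segment ℝ u₁ u₂ := by
  rw [← mem_segment_translate ℝ T]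
  simp

theorem mem_segment_of_sub_mem_span_nonneg {P : AffineSubspace ℝ E} {T u₁ u₂ A : E}
    (hT : T ∉ P) (hu₁ : u₁ ∈ P) (hu₂ : u₂ ∈ P) (hA : A ∈ P)
    (h : A - T ∈ Submodule.span ℝ≥0 {u₁ - T, u₂ - T}) : A ∈ segment ℝ u₁ u₂ := by
  obtain ⟨s, t, hst⟩ := Submodule.mem_span_pair.1 h
  rw [NNReal.smul_def, NNReal.smul_def] at hst
  have hsum : (s : ℝ) + t = 1 := by
    by_contra hne
    have hdir : (s : ℝ) • (u₁ - A) + (t : ℝ) • (u₂ - A) ∈ P.direction :=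
      P.direction.add_mem (P.direction.smul_mem _ (AffineSubspace.vsub_mem_direction hu₁ hA))
        (P.direction.smul_mem _ (AffineSubspace.vsub_mem_direction hu₂ hA))
    have hAT : A - T = (1 - s - t : ℝ)⁻¹ • ((s : ℝ) • (u₁ - A) + (t : ℝ) • (u₂ - A)) := by
      rw [eq_inv_smul_iff₀ (by contrapose! hne; linarith)]
      linear_combination (norm := module) -hst
    refine hT ((AffineSubspace.vsub_left_mem_direction_iff_mem hA T).1 ?_)
    rw [vsub_eq_sub, hAT]
    exact P.direction.smul_mem _ hdir
  exact ⟨s, t, s.2, t.2, hsum, by linear_combination (norm := module) hst + hsum • T⟩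

end Affine

theorem stmt_0_general (P : AffineSubspace ℝ (EuclideanSpace ℝ (Fin 3)))
    (T u₁ u₂ : EuclideanSpace ℝ (Fin 3))
    (hT : T ∉ P) (hu₁ : u₁ ∈ P) (hu₂ : u₂ ∈ P)
    (g₁ g₂ : ℝ → ℝ)
    (hg₁ : StrictAntiOn g₁ (Set.Icc 0 Real.pi))
    (hg₂ : StrictAntiOn g₂ (Set.Icc 0 Real.pi))
    (G : EuclideanSpace ℝ (Fin 3) → ℝ)
    (hG : ∀ A, G A = g₁ (angle (u₁ - T) (A - T)) + g₂ (angle (u₂ - T) (A - T)))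
    (A : EuclideanSpace ℝ (Fin 3)) (hA : A ∈ P)
    (hmax : ∀ B ∈ P, G B ≤ G A) :
    A ∈ segment ℝ u₁ u₂ := by
  have hsegP : segment ℝ u₁ u₂ ⊆ P := P.convex.segment_subset hu₁ hu₂
  have h0 : (0 : EuclideanSpace ℝ (Fin 3)) ∉ segment ℝ (u₁ - T) (u₂ - T) := by
    rw [← sub_self T, sub_mem_segment_sub_iff]
    exact fun hTseg => hT (hsegP hTseg)
  by_contra hAseg
  obtain ⟨b, hb, h₁, h₂⟩ := exists_mem_segment_angle_le_and_angle_lt h0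
    fun hcone => hAseg (mem_segment_of_sub_mem_span_nonneg hT hu₁ hu₂ hA hcone)
  have hB : b + T ∈ segment ℝ u₁ u₂ := by
    rwa [← sub_mem_segment_sub_iff, add_sub_cancel_right]
  have hGB := hmax _ (hsegP hB)
  rw [hG, hG, add_sub_cancel_right] at hGB
  have hIcc : ∀ x y : EuclideanSpace ℝ (Fin 3), angle x y ∈ Set.Icc 0 Real.pi :=
    fun x y => ⟨angle_nonneg x y, angle_le_pi x y⟩
  have hg₁b := hg₁.antitoneOn (hIcc _ _) (hIcc _ _) h₁
  have hg₂b := hg₂ (hIcc _ _) (hIcc _ _) h₂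
  linarith

/-- Proposition 1: let `P` be an affine plane in ℝ³, `T ∉ P` the transmitter location,
and `u₁ ≠ u₂` two user locations in `P`.  For strictly decreasing (on `[0,π]`) rate
functions `g₁, g₂`, the objective is `G(A) = g₁(∠(u₁−T, A−T)) + g₂(∠(u₂−T, A−T))`.
Every maximizer `A ∈ P` of `G` over `P` lies on the closed segment joining `u₁`, `u₂`. -/
theorem stmt_0 (P : AffineSubspace ℝ (EuclideanSpace ℝ (Fin 3)))
    (hP : Module.finrank ℝ P.direction = 2)
    (T u₁ u₂ : EuclideanSpace ℝ (Fin 3))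
    (hT : T ∉ P) (hu₁ : u₁ ∈ P) (hu₂ : u₂ ∈ P) (hne : u₁ ≠ u₂)
    (g₁ g₂ : ℝ → ℝ)
    (hg₁ : StrictAntiOn g₁ (Set.Icc 0 Real.pi))
    (hg₂ : StrictAntiOn g₂ (Set.Icc 0 Real.pi))
    (G : EuclideanSpace ℝ (Fin 3) → ℝ)
    (hG : ∀ A, G A = g₁ (angle (u₁ - T) (A - T)) + g₂ (angle (u₂ - T) (A - T)))
    (A : EuclideanSpace ℝ (Fin 3)) (hA : A ∈ P)
    (hmax : ∀ B ∈ P, G B ≤ G A) :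
    A ∈ segment ℝ u₁ u₂ :=
  stmt_0_general P T u₁ u₂ hT hu₁ hu₂ g₁ g₂ hg₁ hg₂ G hG A hA hmax
end

section
/- Let x and y be linearly independent vectors in a real inner product space, and let w be a nonzero vector that is NOT of the form a·x + b·y with a ≥ 0 and b ≥ 0 (i.e., w does not lie in the convex cone generated by x and y). Then ∠(x, w) + ∠(w, y) > ∠(x, y). (In the beam-steering setting: if the beam orientation does not point to the segment between the two users, then φ₁ + φ₂ > φ₁₋₂, so such a steering is not Pareto efficient.) -/
open InnerProductGeometry

theorem InnerProductGeometry.angle_ne_pi_of_linearIndependent {V : Type*}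
    [NormedAddCommGroup V] [InnerProductSpace ℝ V] {x y : V}
    (hxy : LinearIndependent ℝ ![x, y]) : angle x y ≠ Real.pi := by
  rintro hpi
  obtain ⟨-, r, -, rfl⟩ := angle_eq_pi_iff.mp hpi
  have := LinearIndependent.pair_iff.mp hxy r (-1) (by simp)
  norm_num at this

/-- If `x` and `y` are linearly independent vectors in a real inner product space and `w`
is a nonzero vector that does not lie in the convex cone generated by `x` and `y`
(i.e., `w` is not of the form `a•x + b•y` with `a ≥ 0` and `b ≥ 0`), then
`∠(x,w) + ∠(w,y) > ∠(x,y)`. -/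
theorem stmt_3 {V : Type*} [NormedAddCommGroup V] [InnerProductSpace ℝ V]
    (x y w : V) (hxy : LinearIndependent ℝ ![x, y]) (hw : w ≠ 0)
    (hcone : ¬ ∃ a b : ℝ, 0 ≤ a ∧ 0 ≤ b ∧ w = a • x + b • y) :
    angle x y < angle x w + angle w y := by
  refine (angle_le_angle_add_angle x w y).lt_of_ne fun heq => ?_
  obtain hpi | hspan := (angle_eq_angle_add_angle_iff hw).mp heq
  · exact angle_ne_pi_of_linearIndependent hxy hpi
  · obtain ⟨a, b, hab⟩ := Submodule.mem_span_pair.mp hspan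
    exact hcone ⟨a, b, a.2, b.2, hab.symm⟩
end

section
/- Let P be an affine plane in ℝ³, let T ∈ ℝ³ with T ∉ P, and let u₁, …, u_K ∈ P (K ≥ 2) be user locations. For each k let g_k : ℝ → ℝ be strictly decreasing on [0, π], and for A ∈ P define G(A) = ∑_{k=1}^{K} g_k(∠(u_k − T, A − T)). Then every point A* ∈ P that maximizes G over P lies in the convex hull of {u₁, …, u_K} (Proposition 2: with more than two coplanar users, the optimal steering angle points to a location in the convex hull of the user locations). -/
/-!
If `A ∉ conv{u_k}`, a separating hyperplane gives `η` in the direction `S` of `P` with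
`⟪u_k - A, η⟫ > 0` for all `k`. Correcting `η` for the component of `A - T` normal to `P` yields a
direction `v ∈ S` along which every `cos ∠(u_k - T, A + t v - T)` has positive derivative at
`t = 0`. A small step from `A` along `v` stays in `P` and strictly decreases every angle, so it
strictly increases `G`, contradicting maximality.
-/

open InnerProductGeometry Filter Topology Set
open scoped RealInnerProductSpace

variable {E : Type*} [NormedAddCommGroup E] [InnerProductSpace ℝ E]

theorem HasDerivAt.eventually_nhdsGT_lt {f : ℝ → ℝ} {f' x : ℝ} (hf : HasDerivAt f f' x)
    (hf' : 0 < f') : ∀ᶠ t in 𝓝[>] x, f x < f t := by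
  have hslope := (hasDerivAt_iff_tendsto_slope.mp hf).mono_left (nhdsGT_le_nhdsNE x)
  filter_upwards [hslope.eventually (eventually_gt_nhds hf'), self_mem_nhdsWithin] with t hs ht
  rw [slope_def_field] at hs
  exact sub_pos.mp ((div_pos_iff_of_pos_right (sub_pos.mpr ht)).mp hs)

theorem hasDerivAt_add_smul (a v : E) (t₀ : ℝ) : HasDerivAt (fun t : ℝ => a + t • v) v t₀ := by
  simpa using ((hasDerivAt_id t₀).smul_const v).const_add a

theorem hasDerivAt_norm_add_smul {a : E} (ha : a ≠ 0) (v : E) :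
    HasDerivAt (fun t : ℝ => ‖a + t • v‖) (⟪a, v⟫ / ‖a‖) 0 := by
  have := (hasDerivAt_add_smul a v 0).norm_sq.sqrt (by simpa using ha)
  simp only [Real.sqrt_sq (norm_nonneg _), zero_smul, add_zero] at this
  convert this using 1
  field_simp

theorem InnerProductGeometry.eventually_angle_add_smul_lt {w a v : E} (ha : a ≠ 0)
    (h : ⟪w, a⟫ * ⟪a, v⟫ < ⟪w, v⟫ * ‖a‖ ^ 2) :
    ∀ᶠ t in 𝓝[>] (0 : ℝ), angle w (a + t • v) < angle w a := by
  have hw : w ≠ 0 := by rintro rfl; simp at h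
  have hcos : HasDerivAt (fun t : ℝ => ⟪w, a + t • v⟫ / (‖w‖ * ‖a + t • v‖))
      (‖w‖ * (⟪w, v⟫ * ‖a‖ ^ 2 - ⟪w, a⟫ * ⟪a, v⟫) / (‖w‖ ^ 2 * ‖a‖ ^ 3)) 0 := by
    refine (((hasDerivAt_const (0 : ℝ) w).inner ℝ (hasDerivAt_add_smul a v 0)).div
      ((hasDerivAt_norm_add_smul ha v).const_mul ‖w‖) (by simpa using ⟨hw, ha⟩)).congr_deriv ?_
    have : ‖a‖ ≠ 0 := norm_ne_zero_iff.mpr ha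
    simp
    field_simp
  have hpos : 0 < ‖w‖ * (⟪w, v⟫ * ‖a‖ ^ 2 - ⟪w, a⟫ * ⟪a, v⟫) / (‖w‖ ^ 2 * ‖a‖ ^ 3) :=
    div_pos (mul_pos (norm_pos_iff.mpr hw) (sub_pos.mpr h)) (by positivity)
  filter_upwards [hcos.eventually_nhdsGT_lt hpos] with t ht
  rw [← Real.strictAntiOn_cos.lt_iff_gt ⟨angle_nonneg _ _, angle_le_pi _ _⟩
    ⟨angle_nonneg _ _, angle_le_pi _ _⟩, cos_angle, cos_angle]
  simpa using ht

theorem Submodule.exists_mem_forall_inner_add_mul_inner_lt (S : Submodule ℝ E)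
    [S.HasOrthogonalProjection] {a η : E} (ha : a ∉ S) (hη : η ∈ S) :
    ∃ v ∈ S, ∀ d ∈ S, 0 < ⟪d, η⟫ → ⟪d + a, a⟫ * ⟪a, v⟫ < ⟪d + a, v⟫ * ‖a‖ ^ 2 := by
  set p := S.starProjection a
  have hp : p ∈ S := S.starProjection_apply_mem a
  have hm : ∀ x ∈ S, ⟪a - p, x⟫ = 0 := S.starProjection_inner_eq_zero a
  have hm0 : a - p ≠ 0 := fun h => ha (sub_eq_zero.mp h ▸ hp)
  have ha0 : a ≠ 0 := fun h => ha (h ▸ S.zero_mem)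
  -- For `d ∈ S` the gap between the two sides is `⟪d, ‖a‖² v - ⟪p, v⟫ p⟫`, and this `v` solves
  -- `‖a‖² v - ⟪p, v⟫ p = ‖a‖² ‖a - p‖² η` (Sherman–Morrison).
  refine ⟨‖a - p‖ ^ 2 • η + ⟪p, η⟫ • p, S.add_mem (S.smul_mem _ hη) (S.smul_mem _ hp),
    fun d hd hdη => ?_⟩
  have key : ⟪d + a, ‖a - p‖ ^ 2 • η + ⟪p, η⟫ • p⟫ * ‖a‖ ^ 2
      - ⟪d + a, a⟫ * ⟪a, ‖a - p‖ ^ 2 • η + ⟪p, η⟫ • p⟫ = ‖a‖ ^ 2 * ‖a - p‖ ^ 2 * ⟪d, η⟫ := by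
    have hmd := hm d hd
    have hmη := hm η hη
    have hmp := hm p hp
    clear_value p
    obtain ⟨m, rfl⟩ : ∃ m, a = p + m := ⟨a - p, by abel⟩
    rw [add_sub_cancel_left] at hmd hmη hmp ⊢
    rw [← real_inner_self_eq_norm_sq (p + m), ← real_inner_self_eq_norm_sq m]
    simp only [inner_add_left, inner_add_right, inner_smul_right, hmη, hmp,
      real_inner_comm m d ▸ hmd, real_inner_comm m p ▸ hmp]
    ring
  have : 0 < ‖a‖ ^ 2 * ‖a - p‖ ^ 2 * ⟪d, η⟫ := by positivity
  linarith

theorem exists_forall_inner_sub_pos_of_notMem_convexHull [CompleteSpace E] {s : Set E}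
    (hs : s.Finite) {x : E} (hx : x ∉ convexHull ℝ s) : ∃ η : E, ∀ y ∈ s, 0 < ⟪y - x, η⟫ := by
  obtain ⟨f, c, hfx, hfs⟩ := geometric_hahn_banach_point_closed (convex_convexHull ℝ s)
    (hs.isCompact_convexHull (𝕜 := ℝ)).isClosed hx
  refine ⟨(InnerProductSpace.toDual ℝ E).symm f, fun y hy => ?_⟩
  rw [real_inner_comm, InnerProductSpace.toDual_symm_apply, map_sub, sub_pos]
  exact hfx.trans (hfs y (subset_convexHull ℝ s hy))

theorem AffineSubspace.exists_mem_forall_angle_lt_of_notMem_convexHull [FiniteDimensional ℝ E]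
    {P : AffineSubspace ℝ E} {T A : E} (hT : T ∉ P) (hA : A ∈ P) {ι : Type*} [Finite ι]
    {u : ι → E} (hu : ∀ k, u k ∈ P) (hAu : A ∉ convexHull ℝ (range u)) :
    ∃ B ∈ P, ∀ k, angle (u k - T) (B - T) < angle (u k - T) (A - T) := by
  obtain ⟨η, hη⟩ := exists_forall_inner_sub_pos_of_notMem_convexHull (finite_range u) hAu
  set S := P.direction
  have hdir : ∀ k, u k - A ∈ S := fun k => AffineSubspace.vsub_mem_direction (hu k) hA
  have haS : A - T ∉ S := fun h => hT ((AffineSubspace.vsub_left_mem_direction_iff_mem hA T).mp h)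
  obtain ⟨v, hvS, hv⟩ :=
    S.exists_mem_forall_inner_add_mul_inner_lt haS (S.starProjection_apply_mem η)
  have hlt : ∀ k, ∀ᶠ t in 𝓝[>] (0 : ℝ),
      angle (u k - T) ((A - T) + t • v) < angle (u k - T) (A - T) := by
    intro k
    refine eventually_angle_add_smul_lt (fun h => haS (h ▸ S.zero_mem)) ?_
    have hpos : 0 < ⟪u k - A, S.starProjection η⟫ := by
      rw [← S.inner_starProjection_left_eq_right, S.starProjection_eq_self_iff.mpr (hdir k)]
      exact hη _ ⟨k, rfl⟩
    simpa only [sub_add_sub_cancel] using hv _ (hdir k) hpos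
  obtain ⟨t, ht⟩ := (eventually_all.mpr hlt).exists
  refine ⟨t • v +ᵥ A, AffineSubspace.vadd_mem_of_mem_direction (S.smul_mem t hvS) hA,
    fun k => ?_⟩
  rw [vadd_eq_add, add_sub_assoc, add_comm]
  exact ht k

theorem stmt_5_general (P : AffineSubspace ℝ (EuclideanSpace ℝ (Fin 3)))
    (T : EuclideanSpace ℝ (Fin 3)) (hT : T ∉ P)
    (K : ℕ) (hK : 2 ≤ K)
    (u : Fin K → EuclideanSpace ℝ (Fin 3)) (hu : ∀ k, u k ∈ P)
    (g : Fin K → ℝ → ℝ) (hg : ∀ k, StrictAntiOn (g k) (Set.Icc 0 Real.pi))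
    (G : EuclideanSpace ℝ (Fin 3) → ℝ)
    (hG : ∀ A, G A = ∑ k, g k (angle (u k - T) (A - T)))
    (A : EuclideanSpace ℝ (Fin 3)) (hA : A ∈ P)
    (hmax : ∀ B ∈ P, G B ≤ G A) :
    A ∈ convexHull ℝ (Set.range u) := by
  by_contra hAu
  obtain ⟨B, hBP, hBA⟩ := P.exists_mem_forall_angle_lt_of_notMem_convexHull hT hA hu hAu
  have : Nonempty (Fin K) := ⟨⟨0, by omega⟩⟩
  have hGAB : G A < G B := by
    rw [hG, hG]
    exact Finset.sum_lt_sum_of_nonempty Finset.univ_nonempty fun k _ =>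
      hg k ⟨angle_nonneg _ _, angle_le_pi _ _⟩ ⟨angle_nonneg _ _, angle_le_pi _ _⟩ (hBA k)
  exact (hmax B hBP).not_gt hGAB

/-- Proposition 2: let `P` be an affine plane in ℝ³, `T ∉ P`, and `u₁, …, u_K ∈ P`
(`K ≥ 2`) user locations.  For strictly decreasing (on `[0,π]`) rate functions `g_k`,
the objective is `G(A) = ∑ₖ g_k(∠(u_k−T, A−T))`.  Every maximizer `A ∈ P` of `G`
over `P` lies in the convex hull of `{u₁, …, u_K}`. -/
theorem stmt_5 (P : AffineSubspace ℝ (EuclideanSpace ℝ (Fin 3)))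
    (hP : Module.finrank ℝ P.direction = 2)
    (T : EuclideanSpace ℝ (Fin 3)) (hT : T ∉ P)
    (K : ℕ) (hK : 2 ≤ K)
    (u : Fin K → EuclideanSpace ℝ (Fin 3)) (hu : ∀ k, u k ∈ P)
    (g : Fin K → ℝ → ℝ) (hg : ∀ k, StrictAntiOn (g k) (Set.Icc 0 Real.pi))
    (G : EuclideanSpace ℝ (Fin 3) → ℝ)
    (hG : ∀ A, G A = ∑ k, g k (angle (u k - T) (A - T)))
    (A : EuclideanSpace ℝ (Fin 3)) (hA : A ∈ P)
    (hmax : ∀ B ∈ P, G B ≤ G A) :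
    A ∈ convexHull ℝ (Set.range u) :=
  stmt_5_general P T hT K hK u hu g hg G hG A hA hmax
end

section
/- Let P be an affine plane in ℝ³, let T ∈ ℝ³ with T ∉ P, let u₁, …, u_K ∈ P, let C be the convex hull of {u₁, …, u_K}, let each g_k : ℝ → ℝ be strictly decreasing on [0, π], and let G(A) = ∑_{k=1}^{K} g_k(∠(u_k − T, A − T)) for A ∈ P. Then sup_{A ∈ P} G(A) = sup_{A ∈ C} G(A); that is, restricting the search for the optimal steering aim point from the whole plane to the convex hull of the user locations does not change the optimal value (correctness of the decreased search space). -/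
/-!
Seen from `T`, only directions matter, and the directions of the points of the convex hull `S`
of the users form the cone `K = [0, ∞) • (S - T)`, which avoids `0` since `T ∉ S`. Let `b` be the
unit vector pointing at `A`. The nearest point `q` of `K` to `b` satisfies `⟪y, b⟫ ≤ ⟪y, q⟫` for
all `y ∈ S - T` and `‖q‖ ≤ 1`. Pushing `q` along the minimal-norm point of `S - T`, which has a
nonnegative inner product with all of `S - T`, until it reaches the unit sphere keeps these
inequalities, and the resulting unit vector points at some `A' ∈ S` that sees every user under an
angle no larger than `A` does. As the `g k` are decreasing, `G A ≤ G A'`.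
-/
open InnerProductGeometry RealInnerProductSpace Set
open scoped Pointwise

section Cone

variable {E : Type*} [NormedAddCommGroup E] [InnerProductSpace ℝ E] {C : Set E}

theorem smul_mem_Ici_smul {c : ℝ} (hc : 0 ≤ c) {x : E} (hx : x ∈ Ici (0 : ℝ) • C) :
    c • x ∈ Ici (0 : ℝ) • C := by
  obtain ⟨s, hs, y, hy, rfl⟩ := hx
  exact ⟨c * s, mul_nonneg hc hs, y, hy, mul_smul c s y⟩

theorem Convex.add_mem_Ici_smul (hC : Convex ℝ C) {x y : E} (hx : x ∈ Ici (0 : ℝ) • C)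
    (hy : y ∈ Ici (0 : ℝ) • C) : x + y ∈ Ici (0 : ℝ) • C := by
  obtain ⟨s, hs : 0 ≤ s, x, hxC, rfl⟩ := hx
  obtain ⟨t, ht : 0 ≤ t, y, hyC, rfl⟩ := hy
  rcases (add_nonneg hs ht).eq_or_lt with hst | hst
  · obtain ⟨rfl, rfl⟩ : s = 0 ∧ t = 0 := ⟨by linarith, by linarith⟩
    exact ⟨0, self_mem_Ici, x, hxC, by simp⟩
  · refine ⟨s + t, hst.le, (s / (s + t)) • x + (t / (s + t)) • y,
      hC hxC hyC (by positivity) (by positivity) (by field_simp), ?_⟩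
    show (s + t) • _ = s • x + t • y
    rw [smul_add, smul_smul, smul_smul, mul_div_cancel₀ _ hst.ne', mul_div_cancel₀ _ hst.ne']

theorem Convex.Ici_smul (hC : Convex ℝ C) : Convex ℝ (Ici (0 : ℝ) • C) :=
  fun _ hx _ hy _ _ ha hb _ =>
    hC.add_mem_Ici_smul (smul_mem_Ici_smul ha hx) (smul_mem_Ici_smul hb hy)

theorem IsMinOn.norm_sq_le_inner (hC : Convex ℝ C) {z : E} (hz : z ∈ C) (hmin : IsMinOn norm C z)
    {y : E} (hy : y ∈ C) : ‖z‖ ^ 2 ≤ ⟪z, y⟫ := by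
  have hmin' : IsMinOn (fun w => ‖0 - w‖) C z := by simpa only [zero_sub, norm_neg] using hmin
  have := (norm_eq_iInf_iff_real_inner_le_zero hC hz).1 (hmin'.iInf_eq hz).symm y hy
  rw [zero_sub, inner_neg_left, inner_sub_right, real_inner_self_eq_norm_sq] at this
  linarith

theorem IsCompact.exists_isMinOn_norm_sub_Ici_smul (hC : IsCompact C) (hne : C.Nonempty)
    (h0 : (0 : E) ∉ C) (b : E) :
    ∃ q ∈ Ici (0 : ℝ) • C, IsMinOn (fun w => ‖b - w‖) (Ici (0 : ℝ) • C) q := by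
  obtain ⟨z, hzC, hz⟩ := hC.exists_isMinOn hne continuous_norm.continuousOn
  have hz0 : 0 < ‖z‖ := norm_pos_iff.2 (ne_of_mem_of_not_mem hzC h0)
  set R := 2 * ‖b‖ / ‖z‖
  have h0R : (0 : E) ∈ Icc 0 R • C := ⟨0, ⟨le_rfl, by positivity⟩, z, hzC, zero_smul ℝ z⟩
  obtain ⟨q, hqR, hq⟩ := (isCompact_Icc.smul_set hC).exists_isMinOn (f := fun w => ‖b - w‖)
    ⟨0, h0R⟩ (continuous_const.sub continuous_id).norm.continuousOn
  refine ⟨q, smul_subset_smul_right Icc_subset_Ici_self hqR, ?_⟩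
  rintro _ ⟨t, ht : 0 ≤ t, y, hy, rfl⟩
  by_cases htR : t ≤ R
  · exact hq ⟨t, ⟨ht, htR⟩, y, hy, rfl⟩
  -- beyond the truncation the cone is farther from `b` than `0` is
  have hfar : 2 * ‖b‖ ≤ ‖t • y‖ := calc
    2 * ‖b‖ = R * ‖z‖ := (div_mul_cancel₀ _ hz0.ne').symm
    _ ≤ t * ‖y‖ := mul_le_mul (not_le.1 htR).le (isMinOn_iff.1 hz y hy) hz0.le ht
    _ = ‖t • y‖ := by rw [norm_smul, Real.norm_of_nonneg ht]
  calc ‖b - q‖ ≤ ‖b - 0‖ := isMinOn_iff.1 hq 0 h0R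
    _ ≤ ‖b - t • y‖ := by
      rw [sub_zero]
      linarith [norm_sub_norm_le (t • y) b, norm_sub_rev (t • y) b]

theorem IsCompact.exists_norm_eq_one_mem_Ici_smul_inner_le (hC : IsCompact C) (hCc : Convex ℝ C)
    (hne : C.Nonempty) (h0 : (0 : E) ∉ C) {b : E} (hb : ‖b‖ ≤ 1) :
    ∃ x ∈ Ici (0 : ℝ) • C, ‖x‖ = 1 ∧ ∀ y ∈ C, ⟪y, b⟫ ≤ ⟪y, x⟫ := by
  obtain ⟨z, hzC, hz⟩ := hC.exists_isMinOn hne continuous_norm.continuousOn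
  have hz0 : 0 < ‖z‖ := norm_pos_iff.2 (ne_of_mem_of_not_mem hzC h0)
  have hzK : z ∈ Ici (0 : ℝ) • C := ⟨1, mem_Ici.2 zero_le_one, z, hzC, one_smul ℝ z⟩
  obtain ⟨q, hqK, hq⟩ := hC.exists_isMinOn_norm_sub_Ici_smul hne h0 b
  have hvar := (norm_eq_iInf_iff_real_inner_le_zero hCc.Ici_smul hqK).1 (hq.iInf_eq hqK).symm
  have hq1 : ‖q‖ ≤ 1 := by
    have h := hvar 0 ⟨0, self_mem_Ici, z, hzC, zero_smul ℝ z⟩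
    rw [zero_sub, inner_neg_right, inner_sub_left, real_inner_self_eq_norm_sq] at h
    nlinarith [real_inner_le_norm b q, norm_nonneg q]
  have hqC : ∀ y ∈ C, ⟪y, b⟫ ≤ ⟪y, q⟫ := by
    intro y hy
    have hyK : y ∈ Ici (0 : ℝ) • C := ⟨1, mem_Ici.2 zero_le_one, y, hy, one_smul ℝ y⟩
    have h := hvar (q + y) (hCc.add_mem_Ici_smul hqK hyK)
    rw [add_sub_cancel_left, inner_sub_left, real_inner_comm y b, real_inner_comm y q] at h
    linarith
  obtain ⟨t, ⟨ht0, -⟩, ht⟩ : ∃ t ∈ Icc 0 (2 / ‖z‖), ‖q + t • z‖ = 1 := by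
    refine intermediate_value_Icc (by positivity)
      (by fun_prop : Continuous fun t : ℝ => ‖q + t • z‖).continuousOn ⟨by simpa using hq1, ?_⟩
    have h2 : ‖(2 / ‖z‖) • z‖ = 2 := by
      rw [norm_smul, Real.norm_of_nonneg (by positivity), div_mul_cancel₀ _ hz0.ne']
    have := norm_sub_le (q + (2 / ‖z‖) • z) q
    rw [add_sub_cancel_left, h2] at this
    show 1 ≤ ‖q + (2 / ‖z‖) • z‖
    linarith
  refine ⟨q + t • z, hCc.add_mem_Ici_smul hqK (smul_mem_Ici_smul ht0 hzK), ht, fun y hy => ?_⟩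
  have hzy : 0 ≤ ⟪y, z⟫ :=
    real_inner_comm z y ▸ (sq_nonneg _).trans (hz.norm_sq_le_inner hCc hzC hy)
  rw [inner_add_right, real_inner_smul_right]
  linarith [hqC y hy, mul_nonneg ht0 hzy]

theorem angle_le_angle_of_inner_le {v x b : E} (hxb : ‖x‖ = ‖b‖) (h : ⟪v, b⟫ ≤ ⟪v, x⟫) :
    angle v x ≤ angle v b := by
  unfold angle
  rw [hxb]
  exact Real.arccos_le_arccos (div_le_div_of_nonneg_right h (by positivity))

theorem Convex.exists_mem_forall_angle_sub_le {S : Set E} (hSc : Convex ℝ S) (hS : IsCompact S)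
    (hne : S.Nonempty) {T : E} (hT : T ∉ S) {A : E} (hA : A ≠ T) :
    ∃ A' ∈ S, ∀ p ∈ S, angle (p - T) (A' - T) ≤ angle (p - T) (A - T) := by
  have hCc : Convex ℝ ((· - T) '' S) := by simpa [sub_eq_neg_add] using hSc.translate (-T)
  have h0 : (0 : E) ∉ (· - T) '' S := by
    rintro ⟨p, hp, hpT⟩
    exact hT (sub_eq_zero.1 hpT ▸ hp)
  have hAT : A - T ≠ 0 := sub_ne_zero.2 hA
  have hb : ‖‖A - T‖⁻¹ • (A - T)‖ = 1 := norm_smul_inv_norm (𝕜 := ℝ) hAT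
  obtain ⟨_, ⟨s, hs : 0 ≤ s, _, ⟨A', hA', rfl⟩, rfl⟩, hx, hxb⟩ :=
    (hS.image (continuous_id.sub continuous_const)).exists_norm_eq_one_mem_Ici_smul_inner_le hCc
      (hne.image _) h0 hb.le
  have hs0 : 0 < s := hs.lt_of_ne (by rintro rfl; simp at hx)
  refine ⟨A', hA', fun p hp => ?_⟩
  calc angle (p - T) (A' - T) = angle (p - T) (s • (A' - T)) :=
        (angle_smul_right_of_pos _ _ hs0).symm
    _ ≤ angle (p - T) (‖A - T‖⁻¹ • (A - T)) :=
      angle_le_angle_of_inner_le (hx.trans hb.symm) (hxb _ ⟨p, hp, rfl⟩)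
    _ = angle (p - T) (A - T) := angle_smul_right_of_pos _ _ (inv_pos.2 (norm_pos_iff.2 hAT))

end Cone

theorem stmt_7_general (P : AffineSubspace ℝ (EuclideanSpace ℝ (Fin 3)))
    (T : EuclideanSpace ℝ (Fin 3)) (hT : T ∉ P)
    (K : ℕ) (hK : 0 < K)
    (u : Fin K → EuclideanSpace ℝ (Fin 3)) (hu : ∀ k, u k ∈ P)
    (C : Set (EuclideanSpace ℝ (Fin 3))) (hC : C = convexHull ℝ (Set.range u))
    (g : Fin K → ℝ → ℝ) (hg : ∀ k, StrictAntiOn (g k) (Set.Icc 0 Real.pi))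
    (G : EuclideanSpace ℝ (Fin 3) → ℝ)
    (hG : ∀ A, G A = ∑ k, g k (angle (u k - T) (A - T))) :
    sSup (G '' (P : Set (EuclideanSpace ℝ (Fin 3)))) = sSup (G '' C) := by
  subst hC
  have : Nonempty (Fin K) := ⟨⟨0, hK⟩⟩
  have hCP : convexHull ℝ (range u) ⊆ P := convexHull_min (range_subset_iff.2 hu) P.convex
  refine csSup_eq_csSup_of_forall_exists_le ?_ fun _ ⟨A, hA, hGA⟩ => ⟨_, ⟨A, hCP hA, hGA⟩, le_rfl⟩
  rintro _ ⟨A, hA, rfl⟩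
  obtain ⟨A', hA'C, hA'⟩ := (convex_convexHull ℝ (range u)).exists_mem_forall_angle_sub_le
    ((finite_range u).isCompact_convexHull ℝ) (range_nonempty u).convexHull
    (fun h => hT (hCP h)) (A := A) (by rintro rfl; exact hT hA)
  refine ⟨G A', mem_image_of_mem G hA'C, ?_⟩
  rw [hG, hG]
  exact Finset.sum_le_sum fun k _ => (hg k).antitoneOn ⟨angle_nonneg _ _, angle_le_pi _ _⟩
    ⟨angle_nonneg _ _, angle_le_pi _ _⟩ (hA' (u k) (subset_convexHull ℝ _ (mem_range_self k)))

/-- Correctness of the decreased search space: let `P` be an affine plane in ℝ³,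
`T ∉ P`, `u₁, …, u_K ∈ P` user locations with convex hull `C`, `g_k` strictly
decreasing on `[0,π]`, and `G(A) = ∑ₖ g_k(∠(u_k−T, A−T))`.  Then the supremum of `G`
over the whole plane `P` equals its supremum over `C`. -/
theorem stmt_7 (P : AffineSubspace ℝ (EuclideanSpace ℝ (Fin 3)))
    (hP : Module.finrank ℝ P.direction = 2)
    (T : EuclideanSpace ℝ (Fin 3)) (hT : T ∉ P)
    (K : ℕ) (hK : 0 < K)
    (u : Fin K → EuclideanSpace ℝ (Fin 3)) (hu : ∀ k, u k ∈ P)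
    (C : Set (EuclideanSpace ℝ (Fin 3))) (hC : C = convexHull ℝ (Set.range u))
    (g : Fin K → ℝ → ℝ) (hg : ∀ k, StrictAntiOn (g k) (Set.Icc 0 Real.pi))
    (G : EuclideanSpace ℝ (Fin 3) → ℝ)
    (hG : ∀ A, G A = ∑ k, g k (angle (u k - T) (A - T))) :
    sSup (G '' (P : Set (EuclideanSpace ℝ (Fin 3)))) = sSup (G '' C) :=
  stmt_7_general P T hT K hK u hu C hC g hg G hG
end
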